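/- arXiv:hep-th/9608007 — 2 statements merged into one kernel-verified Lean document; each statement's English description precedes it below -/
import Mathlib

section
/- (The outgoing two-point function of the black hole equals the thermal two-point function at inverse temperature β = 2π/M, as kernels smeared with test functions of zero mean.) Fix M > 0 and set β = 2π/M. Define K_BH(y,y') = log|e^{−My} − e^{−My'}| + iπ·𝟙_{y'<y} and K_th(y,y') = log( (β/π)·|sinh(π(y'−y)/β)| ) + iπ·𝟙_{y'<y}. Then for all Schwartz functions f₁, f₂ : ℝ → ℂ with ∫_ℝ f₁ = ∫_ℝ f₂ = 0, ∬_{ℝ²} f₁(y)·conj(f₂(y'))·K_BH(y,y') dy dy' = ∬_{ℝ²} f₁(y)·conj(f₂(y'))·K_th(y,y') dy dy', both integrals being absolutely convergent. -/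
/-!
Off the diagonal, `e^{-My} - e^{-My'} = 2 e^{-M(y+y')/2} sinh(M(y'-y)/2)`, so for `β = 2π/M` the
two kernels differ by `log M - M(y+y')/2`, a function of `y` plus a function of `y'`. Paired with
`f₁ ⊗ conj f₂` this difference integrates to zero, since both test functions have mean zero.
Absolute convergence holds because `|K_th|` grows at most linearly in `|y - y'|` and has only a
logarithmic, hence integrable, singularity on the diagonal, which the Schwartz decay absorbs.
-/

open MeasureTheory

/-- Boundary-value kernel of the black hole outgoing two-point function. -/
noncomputable def K_BH (M : ℝ) (y y' : ℝ) : ℂ :=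
  (Real.log |Real.exp (-(M * y)) - Real.exp (-(M * y'))| : ℂ)
    + (if y' < y then (Real.pi : ℂ) * Complex.I else 0)

/-- Boundary-value kernel of the thermal two-point function at inverse temperature β. -/
noncomputable def K_th (β : ℝ) (y y' : ℝ) : ℂ :=
  (Real.log ((β / Real.pi) * |Real.sinh (Real.pi * (y' - y) / β)|) : ℂ)
    + (if y' < y then (Real.pi : ℂ) * Complex.I else 0)

open Real SchwartzMap

noncomputable def truncAbsLog : ℝ → ℝ := (Set.Icc (-1) 1).indicator fun t => |log t|

lemma integrable_truncAbsLog : Integrable truncAbsLog := by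
  rw [truncAbsLog, integrable_indicator_iff measurableSet_Icc]
  exact ((intervalIntegrable_iff_integrableOn_Icc_of_le (by norm_num)).1
    intervalIntegral.intervalIntegrable_log').norm

lemma abs_log_le_abs_add_truncAbsLog (t : ℝ) : |log t| ≤ |t| + truncAbsLog t := by
  by_cases ht : |t| ≤ 1
  · rw [truncAbsLog, Set.indicator_of_mem (show t ∈ Set.Icc (-1) 1 from abs_le.1 ht)]
    linarith [abs_nonneg t]
  · have h1 : 1 < |t| := not_le.1 ht
    have hmem : t ∉ Set.Icc (-1) 1 := fun h => ht (abs_le.2 h)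
    rw [truncAbsLog, Set.indicator_of_notMem hmem, ← log_abs, abs_of_nonneg (log_nonneg h1.le)]
    linarith [log_le_sub_one_of_pos (zero_lt_one.trans h1)]

lemma abs_log_mul_le (x y : ℝ) : |log (x * y)| ≤ |log x| + |log y| := by
  rcases eq_or_ne x 0 with rfl | hx
  · simp
  rcases eq_or_ne y 0 with rfl | hy
  · simp
  rw [log_mul hx hy]
  exact abs_add_le _ _

lemma abs_log_sinh_le (u : ℝ) : |log (sinh u)| ≤ |log u| + |u| := by
  rcases eq_or_ne u 0 with rfl | hu
  · simp
  have hu0 : 0 < |u| := abs_pos.2 hu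
  have hlow : |u| ≤ |sinh u| := by
    rw [abs_sinh]
    exact self_le_sinh_iff.2 (abs_nonneg u)
  have hup : |sinh u| ≤ exp |u| := by
    rw [abs_sinh, sinh_eq]
    linarith [exp_pos (-|u|), exp_pos |u|]
  have h1 : log |u| ≤ log |sinh u| := log_le_log hu0 hlow
  have h2 : log |sinh u| ≤ |u| := by simpa using log_le_log (hu0.trans_le hlow) hup
  rw [← log_abs (sinh u), ← log_abs u, abs_le]
  constructor <;> linarith [neg_abs_le (log |u|), le_abs_self (log |u|)]

lemma exp_neg_mul_sub_exp_neg_mul (M y y' : ℝ) :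
    exp (-(M * y)) - exp (-(M * y'))
      = 2 * exp (-(M * (y + y') / 2)) * sinh (M * (y' - y) / 2) := by
  have h : -(M * y) = -(M * (y + y') / 2) + M * (y' - y) / 2 := by ring
  have h' : -(M * y') = -(M * (y + y') / 2) + -(M * (y' - y) / 2) := by ring
  rw [h, h', exp_add, exp_add, sinh_eq]
  ring

section Kernels

variable {M : ℝ} (hM : 0 < M)
include hM

lemma K_th_two_pi_div (y y' : ℝ) :
    K_th (2 * π / M) y y' = (log (2 / M * |sinh (M * (y' - y) / 2)|) : ℂ)
      + (if y' < y then (π : ℂ) * Complex.I else 0) := by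
  have hβ : 2 * π / M / π = 2 / M := by field_simp
  have harg : π * (y' - y) / (2 * π / M) = M * (y' - y) / 2 := by field_simp
  rw [K_th, hβ, harg]

lemma K_BH_eq_K_th_add {y y' : ℝ} (h : y ≠ y') :
    K_BH M y y' = K_th (2 * π / M) y y' + ((log M - M * (y + y') / 2 : ℝ) : ℂ) := by
  have hs : |sinh (M * (y' - y) / 2)| ≠ 0 := by
    rw [abs_ne_zero, sinh_ne_zero]
    exact div_ne_zero (mul_ne_zero hM.ne' (sub_ne_zero.2 h.symm)) two_ne_zero
  have hlog : log |exp (-(M * y)) - exp (-(M * y'))|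
      = log (2 / M * |sinh (M * (y' - y) / 2)|) + (log M - M * (y + y') / 2) := by
    rw [exp_neg_mul_sub_exp_neg_mul, abs_mul, abs_mul, abs_two, abs_of_pos (exp_pos _),
      log_mul (by positivity) hs, log_mul two_ne_zero (exp_pos _).ne', log_exp,
      log_mul (by positivity) hs, log_div two_ne_zero hM.ne']
    ring
  rw [K_BH, K_th_two_pi_div hM, hlog]
  push_cast
  ring

lemma norm_K_th_two_pi_div_le (y y' : ℝ) :
    ‖K_th (2 * π / M) y y'‖
      ≤ (π + 2 * |log (M / 2)|) + (M / 2 + 1) * |y - y'| + truncAbsLog (y - y') := by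
  have hind : ‖(if y' < y then (π : ℂ) * Complex.I else 0)‖ ≤ π := by
    split_ifs <;> simp [abs_of_pos pi_pos, pi_pos.le]
  have hlogM : |log (2 / M)| = |log (M / 2)| := by rw [← inv_div, log_inv, abs_neg]
  have hu : |M * (y' - y) / 2| = M / 2 * |y - y'| := by
    rw [abs_div, abs_mul, abs_of_pos hM, abs_two, abs_sub_comm]
    ring
  have hlog : |log (y' - y)| = |log (y - y')| := by rw [← neg_sub, log_neg_eq_log]
  have hsinh : |log (2 / M * |sinh (M * (y' - y) / 2)|)|
      ≤ 2 * |log (M / 2)| + (M / 2 + 1) * |y - y'| + truncAbsLog (y - y') :=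
    calc _ ≤ |log (2 / M)| + |log (sinh (M * (y' - y) / 2))| := by
          simpa only [log_abs] using abs_log_mul_le (2 / M) |sinh (M * (y' - y) / 2)|
      _ ≤ |log (M / 2)| + (|log (M / 2)| + |log (y' - y)| + M / 2 * |y - y'|) := by
          rw [hlogM, ← hu]
          gcongr
          refine (abs_log_sinh_le _).trans ?_
          gcongr
          rw [mul_div_right_comm]
          exact abs_log_mul_le _ _
      _ ≤ _ := by
          rw [hlog]
          linarith [abs_log_le_abs_add_truncAbsLog (y - y')]
  rw [K_th_two_pi_div hM]
  refine (norm_add_le _ _).trans ?_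
  rw [Complex.norm_real, norm_eq_abs]
  linarith

end Kernels

lemma measurable_K_th (β : ℝ) : Measurable fun p : ℝ × ℝ => K_th β p.1 p.2 :=
  (by fun_prop : Measurable fun p : ℝ × ℝ => (log (β / π * |sinh (π * (p.2 - p.1) / β)|) : ℂ)).add
    (.ite (measurableSet_lt measurable_snd measurable_fst) measurable_const measurable_const)

lemma SchwartzMap.integrable_mul_of_hasTemperateGrowth {D : Type*} [NormedAddCommGroup D]
    [NormedSpace ℝ D] [MeasurableSpace D] [BorelSpace D] [SecondCountableTopology D]
    {μ : Measure D} [μ.HasTemperateGrowth] (f : 𝓢(D, ℂ)) {h : D → ℂ}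
    (hh : h.HasTemperateGrowth) : Integrable (fun x => h x * f x) μ := by
  simpa [smulLeftCLM_apply hh] using (smulLeftCLM ℂ h f).integrable (μ := μ)

section SchwartzOnReal

variable {E E' : Type*} [NormedAddCommGroup E] [NormedSpace ℝ E] [NormedAddCommGroup E']
  [NormedSpace ℝ E']

lemma SchwartzMap.integrable_one_add_abs_mul_norm (f : 𝓢(ℝ, E)) :
    Integrable fun y : ℝ => (1 + |y|) * ‖f y‖ := by
  refine (f.integrable.norm.add (f.integrable_pow_mul volume 1)).congr (ae_of_all _ fun y => ?_)
  simp [add_mul]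

lemma SchwartzMap.integrable_norm_mul_norm_mul_comp_sub (f : 𝓢(ℝ, E)) (g : 𝓢(ℝ, E'))
    {F : ℝ → ℝ}
    (hF : Integrable F) : Integrable fun p : ℝ × ℝ => ‖f p.1‖ * (‖g p.2‖ * F (p.1 - p.2)) := by
  have hconv : Integrable fun p : ℝ × ℝ => ‖g p.2‖ * F (p.1 - p.2) := by
    simpa [Measure.volume_eq_prod] using
      g.integrable.norm.convolution_integrand (ContinuousLinearMap.mul ℝ ℝ) hF
  exact hconv.bdd_mul (c := SchwartzMap.seminorm ℝ 0 0 f) (by fun_prop)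
    (ae_of_all _ fun p => by simpa using f.norm_le_seminorm ℝ p.1)

lemma SchwartzMap.integrable_mul_mul_kernel {K : ℝ → ℝ → ℂ}
    (hK : AEStronglyMeasurable fun p : ℝ × ℝ => K p.1 p.2) {F : ℝ → ℝ} (hF : Integrable F)
    {a b : ℝ} (hb : 0 ≤ b) (hKle : ∀ y y', ‖K y y'‖ ≤ a + b * |y - y'| + F (y - y'))
    (f g : 𝓢(ℝ, ℂ)) : Integrable fun p : ℝ × ℝ => f p.1 * g p.2 * K p.1 p.2 := by
  have hpoly : Integrable fun p : ℝ × ℝ =>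
      (|a| + b) * ((1 + |p.1|) * ‖f p.1‖ * ((1 + |p.2|) * ‖g p.2‖)) := by
    rw [Measure.volume_eq_prod]
    exact (f.integrable_one_add_abs_mul_norm.mul_prod g.integrable_one_add_abs_mul_norm).const_mul _
  refine (hpoly.add (f.integrable_norm_mul_norm_mul_comp_sub g hF)).mono'
    ((by fun_prop : Continuous fun p : ℝ × ℝ => f p.1 * g p.2).aestronglyMeasurable.mul hK)
    (ae_of_all _ fun ⟨y, y'⟩ => ?_)
  have hgrowth : a + b * |y - y'| ≤ (|a| + b) * ((1 + |y|) * (1 + |y'|)) := by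
    have hsub := abs_sub y y'
    nlinarith [le_abs_self a, abs_nonneg a, abs_nonneg y, abs_nonneg y',
      mul_nonneg (abs_nonneg y) (abs_nonneg y')]
  simp only [norm_mul, Pi.add_apply]
  calc ‖f y‖ * ‖g y'‖ * ‖K y y'‖ ≤ ‖f y‖ * ‖g y'‖ * (a + b * |y - y'| + F (y - y')) := by
        gcongr; exact hKle y y'
    _ ≤ ‖f y‖ * ‖g y'‖ * ((|a| + b) * ((1 + |y|) * (1 + |y'|)) + F (y - y')) := by gcongr
    _ = _ := by ring

end SchwartzOnReal

section Separable

variable {α γ 𝕜 : Type*} [MeasurableSpace α] [MeasurableSpace γ] {μ : Measure α} {ν : Measure γ}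
  [RCLike 𝕜] {φ A : α → 𝕜} {ψ B : γ → 𝕜}

lemma integrable_prod_mul_mul_add (hφ : Integrable φ μ) (hψ : Integrable ψ ν)
    (hAφ : Integrable (fun x => A x * φ x) μ) (hBψ : Integrable (fun y => B y * ψ y) ν) :
    Integrable (fun p : α × γ => φ p.1 * ψ p.2 * (A p.1 + B p.2)) (μ.prod ν) :=
  ((hAφ.mul_prod hψ).add (hφ.mul_prod hBψ)).congr
    (ae_of_all _ fun p => by simp only [Pi.add_apply]; ring)

lemma integral_prod_mul_mul_add_eq_zero [SFinite μ] [SFinite ν] (hφ : Integrable φ μ)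
    (hψ : Integrable ψ ν) (hAφ : Integrable (fun x => A x * φ x) μ)
    (hBψ : Integrable (fun y => B y * ψ y) ν) (hφ₀ : ∫ x, φ x ∂μ = 0) (hψ₀ : ∫ y, ψ y ∂ν = 0) :
    ∫ p : α × γ, φ p.1 * ψ p.2 * (A p.1 + B p.2) ∂(μ.prod ν) = 0 := by
  have hsplit : (fun p : α × γ => φ p.1 * ψ p.2 * (A p.1 + B p.2))
      = fun p => A p.1 * φ p.1 * ψ p.2 + φ p.1 * (B p.2 * ψ p.2) := by
    ext p; ring
  rw [hsplit, integral_add (hAφ.mul_prod hψ) (hφ.mul_prod hBψ),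
    integral_prod_mul (fun x => A x * φ x) ψ, integral_prod_mul φ (fun y => B y * ψ y), hφ₀, hψ₀,
    mul_zero, zero_mul, add_zero]

end Separable

lemma MeasureTheory.Measure.ae_prod_fst_ne_snd {α : Type*} [MeasurableSpace α] [MeasurableEq α]
    (μ ν : Measure α) [SFinite ν] [NullSingletonClass ν] : ∀ᵐ p ∂μ.prod ν, p.1 ≠ p.2 :=
  (Measure.ae_prod_iff_ae_ae (p := fun p : α × α => p.1 ≠ p.2) measurableSet_diagonal.compl).2 <|
    ae_of_all _ fun _ => ae_iff.2 (by simp)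

theorem stmt16 (M : ℝ) (hM : 0 < M) (β : ℝ) (hβ : β = 2 * Real.pi / M)
    (f₁ f₂ : SchwartzMap ℝ ℂ)
    (hf₁ : ∫ y : ℝ, f₁ y = 0) (hf₂ : ∫ y : ℝ, f₂ y = 0) :
    Integrable (fun p : ℝ × ℝ => f₁ p.1 * (starRingEnd ℂ) (f₂ p.2) * K_BH M p.1 p.2) ∧
    Integrable (fun p : ℝ × ℝ => f₁ p.1 * (starRingEnd ℂ) (f₂ p.2) * K_th β p.1 p.2) ∧
    (∫ p : ℝ × ℝ, f₁ p.1 * (starRingEnd ℂ) (f₂ p.2) * K_BH M p.1 p.2)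
      = ∫ p : ℝ × ℝ, f₁ p.1 * (starRingEnd ℂ) (f₂ p.2) * K_th β p.1 p.2 := by
  subst hβ
  obtain ⟨g, hg⟩ : ∃ g : 𝓢(ℝ, ℂ), ∀ y, g y = starRingEnd ℂ (f₂ y) :=
    ⟨f₂.postcompCLM (𝕜 := ℝ) Complex.conjCLE.toContinuousLinearMap, fun _ => rfl⟩
  have hg₀ : ∫ y, g y = 0 := by simp [hg, integral_conj, hf₂]
  simp only [← hg]
  have hth : Integrable fun p : ℝ × ℝ => f₁ p.1 * g p.2 * K_th (2 * π / M) p.1 p.2 :=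
    integrable_mul_mul_kernel (measurable_K_th _).aestronglyMeasurable integrable_truncAbsLog
      (by positivity) (norm_K_th_two_pi_div_le hM) f₁ g
  let A : ℝ → ℂ := fun y => log M - (M / 2 : ℝ) * y
  let B : ℝ → ℂ := fun y => -(M / 2 : ℝ) * y
  have hAf₁ := f₁.integrable_mul_of_hasTemperateGrowth (μ := volume) (h := A) (by fun_prop)
  have hBg := g.integrable_mul_of_hasTemperateGrowth (μ := volume) (h := B) (by fun_prop)
  have hsep := integrable_prod_mul_mul_add f₁.integrable g.integrable hAf₁ hBg
  rw [← Measure.volume_eq_prod] at hsep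
  have hae : (fun p : ℝ × ℝ => f₁ p.1 * g p.2 * K_BH M p.1 p.2) =ᵐ[volume]
      fun p => f₁ p.1 * g p.2 * K_th (2 * π / M) p.1 p.2 + f₁ p.1 * g p.2 * (A p.1 + B p.2) := by
    rw [Measure.volume_eq_prod]
    filter_upwards [Measure.ae_prod_fst_ne_snd volume volume] with p hp
    rw [K_BH_eq_K_th_add hM hp]
    simp only [A, B]
    push_cast
    ring
  refine ⟨(hth.add hsep).congr hae.symm, hth, ?_⟩
  rw [integral_congr_ae hae, integral_add hth hsep, Measure.volume_eq_prod,
    integral_prod_mul_mul_add_eq_zero f₁.integrable g.integrable hAf₁ hBg hf₁ hg₀, add_zero]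
end

section
/- (Infrared divergence criterion for the mean particle number of the test functions f_α.) For all β > 0 and α > 0, the integral ∫₀^∞ p^{2α−1}·e^{−2p²}/(e^{βp}−1) dp is finite if and only if α > 1/2; equivalently, for the relativistic black hole with M > 0 (β = 2π/M), the mean number of spontaneously created particles N̄₀[f_α] = C_α²·∫₀^∞ (dp/(2p))·(p^α e^{−p²})²/(e^{2πp/M}−1) for the test function f̂_α(p) = C_α·θ(p)·p^α·e^{−p²} (C_α > 0 a normalization constant) is infinite if and only if α ≤ 1/2. -/
/-!
Near `0` the Bose factor `1 / (exp (β p) - 1)` behaves like `1 / (β p)`: from `β p ≤ exp (β p) - 1`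
the integrand `p ^ s * exp (-b p²) / (exp (β p) - 1)` is at most `β⁻¹ p ^ (s - 1) exp (-b p²)`,
integrable on `(0, ∞)` when `s > 0`, and from `exp (β p) - 1 ≤ β p exp β` it dominates a multiple of
`p ^ (s - 1)` on `(0, 1)`, which is not integrable there when `s ≤ 0`. The mean-number integrand is
`C² / 2` times this one with `s = 2α - 1`, `b = 2`, `β = 2π / M`.
-/

open MeasureTheory Set Real

lemma Real.exp_sub_one_le_mul_exp (x : ℝ) : exp x - 1 ≤ x * exp x := by
  have h : (1 - x) * exp x ≤ 1 := by
    simpa [← exp_add] using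
      mul_le_mul_of_nonneg_right (by linarith [add_one_le_exp (-x)] : 1 - x ≤ exp (-x))
        (exp_pos x).le
  linarith

section BoseGaussian

variable {β b s p : ℝ}

lemma div_exp_mul_sub_one_le (hβ : 0 < β) (hp : 0 < p) :
    p ^ s * exp (-(b * p ^ 2)) / (exp (β * p) - 1) ≤ β⁻¹ * (p ^ (s - 1) * exp (-b * p ^ 2)) :=
  calc p ^ s * exp (-(b * p ^ 2)) / (exp (β * p) - 1)
      ≤ p ^ s * exp (-(b * p ^ 2)) / (β * p) :=
        div_le_div_of_nonneg_left (by positivity) (by positivity)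
          (by linarith [add_one_le_exp (β * p)])
    _ = β⁻¹ * (p ^ (s - 1) * exp (-b * p ^ 2)) := by
        rw [rpow_sub_one hp.ne', neg_mul]; field_simp

lemma le_div_exp_mul_sub_one (hβ : 0 < β) (hb : 0 ≤ b) (hp : p ∈ Ioo 0 1) :
    (β * exp (β + b))⁻¹ * p ^ (s - 1) ≤ p ^ s * exp (-(b * p ^ 2)) / (exp (β * p) - 1) := by
  obtain ⟨hp0, hp1⟩ := hp
  have hden : exp (β * p) - 1 ≤ β * p * exp β :=
    (exp_sub_one_le_mul_exp _).trans <| by gcongr; nlinarith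
  have hgauss : exp (-b) ≤ exp (-(b * p ^ 2)) := by
    gcongr
    nlinarith [mul_le_mul_of_nonneg_left (by nlinarith : p ^ 2 ≤ 1) hb]
  calc (β * exp (β + b))⁻¹ * p ^ (s - 1) = p ^ s * exp (-b) / (β * p * exp β) := by
        rw [rpow_sub_one hp0.ne', exp_add, exp_neg]; field_simp
    _ ≤ p ^ s * exp (-(b * p ^ 2)) / (exp (β * p) - 1) := by
        gcongr
        linarith [add_one_le_exp (β * p), mul_pos hβ hp0]

end BoseGaussian

theorem integrableOn_rpow_mul_exp_neg_mul_sq_div_exp_sub_one_iff {β b s : ℝ} (hβ : 0 < β)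
    (hb : 0 < b) :
    IntegrableOn (fun p => p ^ s * exp (-(b * p ^ 2)) / (exp (β * p) - 1)) (Ioi 0) ↔ 0 < s := by
  constructor
  · intro h
    have hpow : IntegrableOn (fun p : ℝ => p ^ (s - 1)) (Ioo 0 1) := by
      refine ((h.mono_set Ioo_subset_Ioi_self).const_mul (β * exp (β + b))).mono'
        (measurable_id.pow_const _).aestronglyMeasurable ?_
      filter_upwards [ae_restrict_mem measurableSet_Ioo] with p hp
      rw [norm_of_nonneg (rpow_nonneg hp.1.le _), ← inv_mul_le_iff₀ (by positivity)]
      exact le_div_exp_mul_sub_one hβ hb.le hp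
    linarith [(intervalIntegral.integrableOn_Ioo_rpow_iff one_pos).1 hpow]
  · intro hs
    refine ((integrableOn_rpow_mul_exp_neg_mul_sq hb (by linarith : -1 < s - 1)).const_mul
      β⁻¹).mono' (by fun_prop : Measurable _).aestronglyMeasurable ?_
    filter_upwards [ae_restrict_mem measurableSet_Ioi] with p (hp : 0 < p)
    have hden : 0 < exp (β * p) - 1 := sub_pos.2 (one_lt_exp_iff.2 (by positivity))
    rw [norm_of_nonneg (by positivity)]
    exact div_exp_mul_sub_one_le hβ hp

lemma sq_mul_sq_rpow_mul_exp_neg_sq_div {α p : ℝ} (hp : 0 < p) (C D : ℝ) :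
    C ^ 2 * (p ^ α * exp (-(p ^ 2))) ^ 2 / (D * (2 * p)) =
      C ^ 2 / 2 * (p ^ (2 * α - 1) * exp (-(2 * p ^ 2)) / D) := by
  rw [mul_pow, ← rpow_mul_natCast hp.le, ← exp_nat_mul, rpow_sub_one hp.ne']
  push_cast
  rw [mul_comm α 2, neg_mul_eq_mul_neg 2]
  field_simp

theorem stmt19 :
    (∀ β : ℝ, 0 < β → ∀ α : ℝ, 0 < α →
      (IntegrableOn (fun p : ℝ =>
          p ^ (2 * α - 1) * Real.exp (-(2 * p ^ 2)) / (Real.exp (β * p) - 1))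
        (Set.Ioi 0) ↔ α > 1 / 2)) ∧
    (∀ M : ℝ, 0 < M → ∀ α : ℝ, 0 < α → ∀ C : ℝ, 0 < C →
      (¬ IntegrableOn (fun p : ℝ =>
          C ^ 2 * (p ^ α * Real.exp (-(p ^ 2))) ^ 2 /
            ((Real.exp (2 * Real.pi * p / M) - 1) * (2 * p)))
        (Set.Ioi 0) ↔ α ≤ 1 / 2)) := by
  have key {β : ℝ} (hβ : 0 < β) (α : ℝ) :
      IntegrableOn (fun p => p ^ (2 * α - 1) * exp (-(2 * p ^ 2)) / (exp (β * p) - 1))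
        (Ioi 0) ↔ α > 1 / 2 := by
    rw [integrableOn_rpow_mul_exp_neg_mul_sq_div_exp_sub_one_iff hβ two_pos]
    constructor <;> intro <;> linarith
  refine ⟨fun β hβ α _ => key hβ α, fun M hM α _ C hC => ?_⟩
  have hrewrite : EqOn
      (fun p => C ^ 2 * (p ^ α * exp (-(p ^ 2))) ^ 2 / ((exp (2 * π * p / M) - 1) * (2 * p)))
      (fun p => C ^ 2 / 2 * (p ^ (2 * α - 1) * exp (-(2 * p ^ 2)) / (exp (2 * π / M * p) - 1)))
      (Ioi 0) := fun p hp => by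
    dsimp only
    rw [sq_mul_sq_rpow_mul_exp_neg_sq_div hp, div_mul_eq_mul_div (2 * π) M p]
  rw [integrableOn_congr_fun hrewrite measurableSet_Ioi, IntegrableOn,
    integrable_const_mul_iff (by positivity : C ^ 2 / 2 ≠ 0).isUnit, ← IntegrableOn,
    key (by positivity), not_lt]
end
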